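/- Assume the setup, the stability assumption, and the γ-feasibility assumption, and let γ ∈ [γ_min, γ_max]. Then for every tangent space T' = T(L') at a rank-r symmetric matrix L' with ρ(T, T') ≤ ξ(T)/2, writing Y = Ω × T', the maximum effect on the orthogonal complement is controlled: for all (M, N) ∈ Ω × T', ‖P_{Y^⊥} D H*(M+N)‖_γ ≤ (1−ν) ‖P_Y D H*(M+N)‖_γ. -/

import Mathlib

noncomputable section

open scoped BigOperators
open Matrix

namespace IsingSL

/-- The space of real `d × d` matrices.  Symmetry (membership in `Sym(d)`) is imposed
through explicit hypotheses `Matrix.IsSymm`. -/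
abbrev Mat (d : ℕ) := Matrix (Fin d) (Fin d) ℝ

/-- The trace inner product `⟨A, B⟩ = tr(Aᵀ B)`. -/
def minner {d : ℕ} (A B : Mat d) : ℝ := (Aᵀ * B).trace

/-- Entrywise `ℓ∞`-norm of a matrix. -/
def normInf {d : ℕ} (M : Mat d) : ℝ := ⨆ p : Fin d × Fin d, |M p.1 p.2|

/-- Entrywise `ℓ1`-norm of a matrix. -/
def norm1 {d : ℕ} (M : Mat d) : ℝ := ∑ i, ∑ j, |M i j|

/-- Euclidean norm of a vector. -/
def vnorm {d : ℕ} (v : Fin d → ℝ) : ℝ := Real.sqrt (∑ i, v i ^ 2)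

/-- Spectral norm (`ℓ2`-operator norm) of a matrix. -/
def specNorm {d : ℕ} (M : Mat d) : ℝ :=
  sSup {t | ∃ v : Fin d → ℝ, vnorm v ≤ 1 ∧ t = vnorm (M.mulVec v)}

/-- Nuclear norm of a matrix (sum of singular values), characterized via
trace duality with the spectral norm. -/
def nucNorm {d : ℕ} (M : Mat d) : ℝ :=
  sSup {t | ∃ B : Mat d, specNorm B ≤ 1 ∧ t = minner M B}

/-- The `γ`-norm of a pair of matrices: `‖(S, L)‖_γ = max {‖S‖_∞/γ, ‖L‖}`. -/
def ganorm {d : ℕ} (γ : ℝ) (S L : Mat d) : ℝ := max (normInf S / γ) (specNorm L)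

/-- The `{0,1}`-vector corresponding to `x : Fin d → Bool`. -/
def b2r {d : ℕ} (x : Fin d → Bool) : Fin d → ℝ := fun i => if x i then 1 else 0

/-- The sufficient statistics `Φ(x) = x xᵀ` for `x ∈ {0,1}^d`. -/
def phi {d : ℕ} (x : Fin d → Bool) : Mat d := Matrix.of fun i j => b2r x i * b2r x j

/-- The log-partition function `a(Θ)` of the pairwise Ising model. -/
def logA {d : ℕ} (Θ : Mat d) : ℝ :=
  Real.log (∑ x : Fin d → Bool, Real.exp (minner Θ (phi x)))

/-- The Ising probability mass function `p(x) = exp(⟨Θ, Φ(x)⟩ - a(Θ))`. -/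
def isingPMF {d : ℕ} (Θ : Mat d) (x : Fin d → Bool) : ℝ :=
  Real.exp (minner Θ (phi x) - logA Θ)

/-- `Φ* = E_Θ[Φ]`, the expected sufficient statistics; this is the gradient `∇a(Θ)`
of the log-partition function w.r.t. the trace inner product. -/
def meanPhi {d : ℕ} (Θ : Mat d) : Mat d := ∑ x : Fin d → Bool, isingPMF Θ x • phi x

/-- The Hessian `∇²a(Θ)` of the log-partition function as a linear operator on matrices;
it is the covariance operator `M ↦ E[⟨Φ,M⟩Φ] - ⟨E[Φ],M⟩E[Φ]` of the sufficient statistics. -/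
def hessA {d : ℕ} (Θ : Mat d) (M : Mat d) : Mat d :=
  (∑ x : Fin d → Bool, (isingPMF Θ x * minner (phi x) M) • phi x)
    - minner (meanPhi Θ) M • meanPhi Θ

/-- The empirical second-moment matrix `Φ^n` of a sample. -/
def empPhi {d n : ℕ} (xs : Fin n → (Fin d → Bool)) : Mat d :=
  (n : ℝ)⁻¹ • ∑ k, phi (xs k)

/-- The negative log-likelihood `ℓ(Θ) = a(Θ) - ⟨Θ, Φ^n⟩`. -/
def nll {d : ℕ} (Phin Θ : Mat d) : ℝ := logA Θ - minner Θ Phin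

/-- The probability of the event `E` under `n` i.i.d. samples from the Ising
distribution with parameter `Θ`. -/
def samplesProb {d : ℕ} (Θ : Mat d) (n : ℕ) (E : Set (Fin n → (Fin d → Bool))) : ℝ :=
  ∑ xs : Fin n → (Fin d → Bool), E.indicator (fun ys => ∏ k, isingPMF Θ (ys k)) xs

/-- Probability vectors on `{0,1}^d`. -/
def IsProbVec {d : ℕ} (p : (Fin d → Bool) → ℝ) : Prop :=
  (∀ x, 0 ≤ p x) ∧ ∑ x : Fin d → Bool, p x = 1

/-- The (Shannon) entropy `H(p) = -Σ_x p(x) log p(x)` (with `0 log 0 = 0`). -/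
def entropy {d : ℕ} (p : (Fin d → Bool) → ℝ) : ℝ :=
  -∑ x : Fin d → Bool, p x * Real.log (p x)

/-- The expectation `E_p[Φ]` of the sufficient statistics under `p`. -/
def Ephi {d : ℕ} (p : (Fin d → Bool) → ℝ) : Mat d :=
  ∑ x : Fin d → Bool, p x • phi x

/-- The linear identification of `d × d` matrices with the euclidean space on `d·d`
coordinates; under this identification the euclidean inner product corresponds to the
trace inner product on matrices. -/
def matEuclid (d : ℕ) : Mat d ≃ₗ[ℝ] EuclideanSpace ℝ (Fin d × Fin d) where
  toFun M := WithLp.toLp 2 (fun p => M p.1 p.2)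
  invFun v := Matrix.of fun i j => v (i, j)
  map_add' _ _ := rfl
  map_smul' _ _ := rfl
  left_inv _ := rfl
  right_inv _ := rfl

/-- Orthogonal projection onto a subspace `V` of `Mat d`, w.r.t. the trace inner product. -/
def proj {d : ℕ} (V : Submodule ℝ (Mat d)) (M : Mat d) : Mat d :=
  (matEuclid d).symm
    ((Submodule.orthogonalProjectionOnto (V.map ((matEuclid d) : Mat d →ₗ[ℝ] EuclideanSpace ℝ (Fin d × Fin d)))
      ((matEuclid d) M) : EuclideanSpace ℝ (Fin d × Fin d)))

/-- Projection onto the orthogonal complement of `V`. -/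
def projPerp {d : ℕ} (V : Submodule ℝ (Mat d)) (M : Mat d) : Mat d := M - proj V M

/-- The twisting `ρ(T, T') = max_{‖M‖=1} ‖(P_T - P_{T'}) M‖` between two subspaces. -/
def rho {d : ℕ} (T T' : Submodule ℝ (Mat d)) : ℝ :=
  sSup {t | ∃ M : Mat d, specNorm M = 1 ∧ t = specNorm (proj T M - proj T' M)}

/-- `ξ(T)`: the smallest `ξ` with `‖M‖_∞ ≤ ξ ‖M‖` for all `M ∈ T`. -/
def xi {d : ℕ} (T : Submodule ℝ (Mat d)) : ℝ :=
  sInf {c | ∀ M ∈ T, normInf M ≤ c * specNorm M}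

/-- `μ(Ω)`: the smallest `μ` with `‖N‖ ≤ μ ‖N‖_∞` for all `N ∈ Ω`. -/
def mu {d : ℕ} (Om : Submodule ℝ (Mat d)) : ℝ :=
  sInf {c | ∀ N ∈ Om, specNorm N ≤ c * normInf N}

/-- `Ω(S) = {M ∈ Sym(d) : supp(M) ⊆ supp(S)}`, the tangent space at `S` to the variety
of symmetric matrices with at most `|supp S|` nonzero entries. -/
def OmegaS {d : ℕ} (S : Mat d) : Submodule ℝ (Mat d) where
  carrier := {M | M.IsSymm ∧ ∀ i j, S i j = 0 → M i j = 0}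
  add_mem' := by
    rintro a b ⟨ha, ha0⟩ ⟨hb, hb0⟩
    refine ⟨?_, fun i j h => ?_⟩
    · show (a + b)ᵀ = a + b
      rw [Matrix.transpose_add, ha, hb]
    · show a i j + b i j = 0
      rw [ha0 i j h, hb0 i j h, add_zero]
  zero_mem' := by
    refine ⟨?_, fun i j _ => rfl⟩
    show (0 : Mat _)ᵀ = 0
    rw [Matrix.transpose_zero]
  smul_mem' := by
    rintro c a ⟨ha, ha0⟩
    refine ⟨?_, fun i j h => ?_⟩
    · show (c • a)ᵀ = c • a
      rw [Matrix.transpose_smul, ha]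
    · show c * a i j = 0
      rw [ha0 i j h, mul_zero]

/-- `T(L) = {U Xᵀ + X Uᵀ : X ∈ ℝ^{d×r}}`, the tangent space at `L = U D Uᵀ` to the
variety of symmetric matrices of rank at most `r`. -/
def TSpace {d r : ℕ} (U : Matrix (Fin d) (Fin r) ℝ) : Submodule ℝ (Mat d) where
  carrier := {M | ∃ X : Matrix (Fin d) (Fin r) ℝ, M = U * Xᵀ + X * Uᵀ}
  add_mem' := by
    rintro a b ⟨X, rfl⟩ ⟨Y, rfl⟩
    exact ⟨X + Y, by rw [Matrix.transpose_add, Matrix.mul_add, Matrix.add_mul]; abel⟩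
  zero_mem' := ⟨0, by simp⟩
  smul_mem' := by
    rintro c a ⟨X, rfl⟩
    exact ⟨c • X, by rw [Matrix.transpose_smul, Matrix.mul_smul, Matrix.smul_mul, smul_add]⟩

/-- `T'` is the tangent space `T(L')` at some rank-`r` symmetric matrix
`L' = U D Uᵀ` (restricted eigenvalue decomposition: `U` with orthonormal columns,
`D` invertible diagonal). -/
def IsTangentSpace (d r : ℕ) (T' : Submodule ℝ (Mat d)) : Prop :=
  ∃ (U : Matrix (Fin d) (Fin r) ℝ) (D : Matrix (Fin r) (Fin r) ℝ),
    Uᵀ * U = 1 ∧ D.IsDiag ∧ IsUnit D.det ∧ T' = TSpace U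

/-- A solution of the tangent-space constrained problem
`min_{(S,L) ∈ Om × T'} ℓ(S+L) + λ(γ‖S‖₁ + ‖L‖_*)`. -/
def IsYSol {d : ℕ} (Om T' : Submodule ℝ (Mat d)) (Phin : Mat d) (lam γ : ℝ)
    (p : Mat d × Mat d) : Prop :=
  p.1 ∈ Om ∧ p.2 ∈ T' ∧
    ∀ q : Mat d × Mat d, q.1 ∈ Om → q.2 ∈ T' →
      nll Phin (p.1 + p.2) + lam * (γ * norm1 p.1 + nucNorm p.2) ≤
        nll Phin (q.1 + q.2) + lam * (γ * norm1 q.1 + nucNorm q.2)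

/-- A solution of the convex program
`min_{S, L ∈ Sym(d), L ⪰ 0} ℓ(S+L) + λ(γ‖S‖₁ + tr L)`. -/
def IsSLSol {d : ℕ} (Phin : Mat d) (lam γ : ℝ) (p : Mat d × Mat d) : Prop :=
  p.1.IsSymm ∧ p.2.PosSemidef ∧
    ∀ q : Mat d × Mat d, q.1.IsSymm → q.2.PosSemidef →
      nll Phin (p.1 + p.2) + lam * (γ * norm1 p.1 + p.2.trace) ≤
        nll Phin (q.1 + q.2) + lam * (γ * norm1 q.1 + q.2.trace)

/-- The setup: a nonzero symmetric matrix `S*` and a positive-semidefinite `L*` with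
restricted eigenvalue decomposition `L* = U D Uᵀ` (so `L*` has rank `r`). -/
structure Setup (d r : ℕ) where
  Sstar : Mat d
  U : Matrix (Fin d) (Fin r) ℝ
  Dg : Matrix (Fin r) (Fin r) ℝ
  hU : Uᵀ * U = 1
  hDdiag : Dg.IsDiag
  hDunit : IsUnit Dg.det
  hSsymm : Sstar.IsSymm
  hSne : Sstar ≠ 0
  hLpsd : (U * Dg * Uᵀ).PosSemidef

namespace Setup

variable {d r : ℕ} (C : Setup d r)

/-- `L* = U D Uᵀ`. -/
def Lstar : Mat d := C.U * C.Dg * C.Uᵀ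

/-- `Θ* = S* + L*`. -/
def Thstar : Mat d := C.Sstar + C.Lstar

/-- `Ω = Ω(S*)`. -/
def Om : Submodule ℝ (Mat d) := OmegaS C.Sstar

/-- `T = T(L*)`. -/
def Tt : Submodule ℝ (Mat d) := TSpace C.U

/-- `H* = ∇²a(Θ*)`, the Hessian of the log-partition function at `Θ*`. -/
def Hop : Mat d → Mat d := hessA C.Thstar

/-- `‖H*‖`, the operator norm of `H*` w.r.t. the spectral norm. -/
def HopNorm : ℝ := sSup {t | ∃ M : Mat d, specNorm M = 1 ∧ t = specNorm (C.Hop M)}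

/-- `ξ(T)`. -/
def xiT : ℝ := xi C.Tt

/-- `μ(Ω)`. -/
def muOm : ℝ := mu C.Om

/-- `α_Ω = min {‖P_Ω H*(M)‖_∞ : M ∈ Ω, ‖M‖_∞ = 1}`. -/
def alphaOm : ℝ :=
  sInf {t | ∃ M, M ∈ C.Om ∧ normInf M = 1 ∧ t = normInf (proj C.Om (C.Hop M))}

/-- `α_{T,ε}`. -/
def alphaT (ε : ℝ) : ℝ :=
  sInf {t | ∃ T' : Submodule ℝ (Mat d), IsTangentSpace d r T' ∧ rho C.Tt T' ≤ ε ∧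
    ∃ M, M ∈ T' ∧ specNorm M = 1 ∧ t = specNorm (proj T' (C.Hop M))}

/-- `δ_Ω = max {‖P_{Ω^⊥} H*(M)‖_∞ : M ∈ Ω, ‖M‖_∞ = 1}`. -/
def deltaOm : ℝ :=
  sSup {t | ∃ M, M ∈ C.Om ∧ normInf M = 1 ∧ t = normInf (projPerp C.Om (C.Hop M))}

/-- `δ_{T,ε}`. -/
def deltaT (ε : ℝ) : ℝ :=
  sSup {t | ∃ T' : Submodule ℝ (Mat d), IsTangentSpace d r T' ∧ rho C.Tt T' ≤ ε ∧
    ∃ M, M ∈ T' ∧ specNorm M = 1 ∧ t = specNorm (projPerp T' (C.Hop M))}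

/-- `β_Ω = max {‖H*(M)‖ : M ∈ Ω, ‖M‖ = 1}`. -/
def betaOm : ℝ :=
  sSup {t | ∃ M, M ∈ C.Om ∧ specNorm M = 1 ∧ t = specNorm (C.Hop M)}

/-- `β_T`. -/
def betaT : ℝ :=
  sSup {t | ∃ T' : Submodule ℝ (Mat d), IsTangentSpace d r T' ∧ rho C.Tt T' ≤ C.xiT / 2 ∧
    ∃ M, M ∈ T' ∧ normInf M = 1 ∧ t = normInf (C.Hop M)}

/-- `β = max {β_Ω, β_T}`. -/
def betaC : ℝ := max C.betaOm C.betaT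

/-- `α = min {α_Ω, α_{T,ξ(T)/2}}`. -/
def alphaC : ℝ := min C.alphaOm (C.alphaT (C.xiT / 2))

/-- `δ = max {δ_Ω, δ_{T,ξ(T)/2}}`. -/
def deltaC : ℝ := max C.deltaOm (C.deltaT (C.xiT / 2))

/-- The stability assumption: `α > 0` and `δ/α ≤ 1 - 2ν` for some `ν ∈ (0, 1/2]`. -/
def Stability (ν : ℝ) : Prop :=
  0 < C.alphaC ∧ 0 < ν ∧ ν ≤ 1 / 2 ∧ C.deltaC / C.alphaC ≤ 1 - 2 * ν

/-- `γ_min = 3β(2-ν)ξ(T)/(να)`. -/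
def gammaMin (ν : ℝ) : ℝ := 3 * C.betaC * (2 - ν) * C.xiT / (ν * C.alphaC)

/-- `γ_max = να/(2β(2-ν)μ(Ω))`. -/
def gammaMax (ν : ℝ) : ℝ := ν * C.alphaC / (2 * C.betaC * (2 - ν) * C.muOm)

/-- The `γ`-feasibility assumption: the range `[γ_min, γ_max]` is non-empty. -/
def GammaFeasible (ν : ℝ) : Prop := C.gammaMin ν ≤ C.gammaMax ν

/-- `ω = max {να/(3β(2-ν)), 1}`. -/
def omg (ν : ℝ) : ℝ := max (ν * C.alphaC / (3 * C.betaC * (2 - ν))) 1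

/-- `c₂ = 40/α + 1/‖H*‖`. -/
def c2 : ℝ := 40 / C.alphaC + 1 / C.HopNorm

/-- `c₃ = (6(2-ν)/ν + 1) c₂² ‖H*‖ ω`. -/
def c3 (ν : ℝ) : ℝ := (6 * (2 - ν) / ν + 1) * C.c2 ^ 2 * C.HopNorm * C.omg ν

/-- `c₄ = c₂ + 3αc₂²(2-ν)/(16(3-ν))`. -/
def c4 (ν : ℝ) : ℝ := C.c2 + 3 * C.alphaC * C.c2 ^ 2 * (2 - ν) / (16 * (3 - ν))

/-- `c₅ = max {c₃, c₄}`. -/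
def c5 (ν : ℝ) : ℝ := max (C.c3 ν) (C.c4 ν)

/-- `c₆ = ναc₂/(2β(2-ν))`. -/
def c6 (ν : ℝ) : ℝ := ν * C.alphaC * C.c2 / (2 * C.betaC * (2 - ν))

/-- `c₀ = 2 l(r₀) ω max{να/(2β(2-ν)), 1}²`. -/
def c0 (ν l0 : ℝ) : ℝ :=
  2 * l0 * C.omg ν * (max (ν * C.alphaC / (2 * C.betaC * (2 - ν))) 1) ^ 2

/-- `c₁ = max{1, να/(2β(2-ν))}⁻¹ r₀/2`. -/
def c1 (ν r0 : ℝ) : ℝ :=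
  (max 1 (ν * C.alphaC / (2 * C.betaC * (2 - ν))))⁻¹ * r0 / 2

/-- `s_min`, the smallest absolute value of a nonzero entry of `S*`. -/
def smin : ℝ := sInf {t | ∃ i j, C.Sstar i j ≠ 0 ∧ t = |C.Sstar i j|}

/-- `σ_min`, the smallest nonzero eigenvalue of `L*`. -/
def sigmin : ℝ := sInf {t | t ≠ 0 ∧ ∃ i, t = C.hLpsd.1.eigenvalues i}

/-- The gap assumption: `s_min ≥ c₆λ_n/μ(Ω)` and `σ_min ≥ c₅λ_n/ξ(T)²`. -/
def GapAssumption (ν lam : ℝ) : Prop :=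
  C.c6 ν * lam / C.muOm ≤ C.smin ∧ C.c5 ν * lam / C.xiT ^ 2 ≤ C.sigmin

/-- `l0` is a Lipschitz constant (in operator norm w.r.t. the spectral norm) of the
Hessian `∇²a` on the ball `{Θ : ‖Θ - Θ*‖ ≤ r0}`. -/
def HessLip (r0 l0 : ℝ) : Prop :=
  ∀ Θ Θ' : Mat d, specNorm (Θ - C.Thstar) ≤ r0 → specNorm (Θ' - C.Thstar) ≤ r0 →
    ∀ M : Mat d, specNorm (hessA Θ M - hessA Θ' M) ≤ l0 * specNorm (Θ - Θ') * specNorm M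

/-- The correct model set `M`. -/
def Mset (γ ν lam : ℝ) : Set (Mat d × Mat d) :=
  {p | p.1 ∈ C.Om ∧ p.2.IsSymm ∧ p.2.rank ≤ C.Lstar.rank ∧
    ganorm γ (C.Hop ((p.1 - C.Sstar) + (p.2 - C.Lstar)))
      (C.Hop ((p.1 - C.Sstar) + (p.2 - C.Lstar))) ≤ 9 * lam ∧
    specNorm (projPerp C.Tt (p.2 - C.Lstar)) ≤ C.xiT * lam / (C.omg ν * C.HopNorm)}

end Setup

/-
Write `a = ‖M‖_∞`, `b = ‖N‖` and split `H*(M + N) = H*M + H*N`. The stability constants control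
the diagonal terms: `α` bounds `P_Ω H*M` and `P_{T'} H*N` from below, `δ` bounds `P_{Ω⊥} H*M` and
`P_{T'⊥} H*N` from above. The cross terms are controlled by `β` after a change of norm:
`‖M‖ ≤ μ(Ω) a`, and `‖N‖_∞ ≤ 2 ξ(T) b` because `ρ(T, T') ≤ ξ(T)/2` keeps `N` within `ξ(T) b / 2`
of its projection onto `T`. Projecting onto `Ω` or `Ω⊥` does not increase `‖·‖_∞`, and for
symmetric `X` the projections onto `T'⊥` and `T'` are `QXQ` and `X - QXQ` with `Q = 1 - UUᵀ`, so
they at most double the spectral norm. Hence the components of `P_Y D H*(M+N)` are at least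
`αa - 2βξb` and `αb - 2βμa`, those of `P_{Y⊥} D H*(M+N)` at most `δa + 2βξb` and `δb + βμa`, and
`γ ∈ [γ_min, γ_max]` makes the cross terms small enough for `δ ≤ (1 - 2ν)α` to leave the factor
`1 - ν`. That `β > 0` (so that `γ > 0`) holds because `H*` is the covariance operator of `Φ`,
which is definite on symmetric matrices.
-/

lemma sum_mul_sub_sq_eq {ι : Type*} [Fintype ι] {p : ι → ℝ} (hp : ∑ i, p i = 1)
    (c : ι → ℝ) :
    ∑ i, p i * (c i - ∑ j, p j * c j) ^ 2 = ∑ i, p i * c i ^ 2 - (∑ i, p i * c i) ^ 2 := by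
  set m := ∑ j, p j * c j
  have h : ∀ i, p i * (c i - m) ^ 2 = p i * c i ^ 2 - 2 * m * (p i * c i) + m ^ 2 * p i :=
    fun i => by ring
  rw [Finset.sum_congr rfl fun i _ => h i, Finset.sum_add_distrib, Finset.sum_sub_distrib,
    ← Finset.mul_sum, ← Finset.mul_sum, hp]
  ring

lemma max_div_le_one_sub_mul_max_div {α β δ ξ μ ν γ a b g₁ g₂ h₁ h₂ : ℝ} (hα : 0 ≤ α)
    (hν : 0 < ν) (hν' : ν ≤ 1 / 2) (hγ : 0 < γ) (ha : 0 ≤ a) (hb : 0 ≤ b)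
    (hδ : δ ≤ (1 - 2 * ν) * α)
    (hξ : 3 * β * (2 - ν) * ξ ≤ ν * α * γ) (hμ : 2 * β * (2 - ν) * μ * γ ≤ ν * α)
    (hg₁ : α * a - 2 * β * ξ * b ≤ g₁) (hg₂ : α * b - 2 * β * μ * a ≤ g₂)
    (hh₁ : h₁ ≤ δ * a + 2 * β * ξ * b) (hh₂ : h₂ ≤ δ * b + β * μ * a) :
    max (h₁ / γ) h₂ ≤ (1 - ν) * max (g₁ / γ) g₂ := by
  set g := max (g₁ / γ) g₂
  have hγg : α * a - 2 * β * ξ * b ≤ γ * g :=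
    hg₁.trans ((div_le_iff₀' hγ).1 (le_max_left _ _))
  have hg : α * b - 2 * β * μ * a ≤ g := hg₂.trans (le_max_right _ _)
  have hh₁' : h₁ ≤ (1 - 2 * ν) * α * a + 2 * β * ξ * b := by
    nlinarith [mul_le_mul_of_nonneg_right hδ ha]
  have hh₂' : h₂ ≤ (1 - 2 * ν) * α * b + β * μ * a := by
    nlinarith [mul_le_mul_of_nonneg_right hδ hb]
  have h2ν : 0 < 2 - ν := by linarith
  have h32ν : 0 < 3 - 2 * ν := by linarith
  have hξ' := mul_nonneg hb (sub_nonneg.2 hξ)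
  have hμ' := mul_nonneg ha (sub_nonneg.2 hμ)
  have hαγb : 0 ≤ ν * α * γ * b := by positivity
  -- Both claims are nonnegative combinations of the bounds above; the second one only after
  -- clearing the denominator `12 (2 - ν) γ`.
  have key₁ : h₁ ≤ (1 - ν) * (γ * g) := by
    have e₁ := mul_nonneg (by nlinarith : (0 : ℝ) ≤ 2 - 4 * ν + ν ^ 2) (sub_nonneg.2 hγg)
    have e₂ := mul_nonneg (mul_pos (mul_pos hν h2ν) hγ).le (sub_nonneg.2 hg)
    have e₃ := mul_nonneg hν.le hμ'
    have e₄ := mul_nonneg h2ν.le hξ'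
    have e₅ := mul_nonneg h2ν.le hαγb
    linarith
  have key₂ : 0 ≤ 12 * (2 - ν) * γ * ((1 - ν) * g - h₂) := by
    have e₁ := mul_nonneg (mul_pos h2ν (mul_pos hν h32ν)).le (sub_nonneg.2 hγg)
    have e₂ := mul_nonneg (mul_nonneg (mul_nonneg h2ν.le
      (by nlinarith : (0 : ℝ) ≤ 4 - 7 * ν + 2 * ν ^ 2)) hγ.le) (sub_nonneg.2 hg)
    have e₃ := mul_nonneg (mul_pos h2ν hγ).le (sub_nonneg.2 hh₂')
    have e₄ := mul_nonneg (mul_pos h2ν h32ν).le hμ'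
    have e₅ := mul_nonneg (mul_pos hν h32ν).le hξ'
    have e₆ := mul_nonneg (by nlinarith : (0 : ℝ) ≤ 6 + 3 * ν - 2 * ν ^ 2) hαγb
    linarith
  refine max_le ((div_le_iff₀ hγ).2 (by linarith)) ?_
  linarith [(mul_nonneg_iff_of_pos_left (by positivity : (0 : ℝ) < 12 * (2 - ν) * γ)).1 key₂]

section Homogeneous

variable {E : Type*} [AddCommGroup E] [Module ℝ E] {n f : E → ℝ} {K : ℝ} {x : E}

lemma apply_eq_zero_of_homogeneous (hn0 : ∀ x, n x = 0 → x = 0)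
    (hf : ∀ (c : ℝ) x, f (c • x) = |c| * f x) (h : n x = 0) : f x = 0 := by
  rw [hn0 x h, ← zero_smul ℝ (0 : E), hf, abs_zero, zero_mul]

lemma apply_inv_smul_of_homogeneous (hn : ∀ (c : ℝ) x, n (c • x) = |c| * n x)
    (hf : ∀ (c : ℝ) x, f (c • x) = |c| * f x) (h : 0 < n x) :
    n ((n x)⁻¹ • x) = 1 ∧ f ((n x)⁻¹ • x) = f x / n x := by
  rw [hn, hf, abs_inv, abs_of_pos h, inv_mul_cancel₀ h.ne', inv_mul_eq_div]
  exact ⟨rfl, rfl⟩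

lemma le_mul_of_forall_unit (hnn : ∀ x, 0 ≤ n x) (hn : ∀ (c : ℝ) x, n (c • x) = |c| * n x)
    (hn0 : ∀ x, n x = 0 → x = 0) (hf : ∀ (c : ℝ) x, f (c • x) = |c| * f x)
    (hK : ∀ c : ℝ, n (c • x) = 1 → f (c • x) ≤ K) : f x ≤ K * n x := by
  rcases (hnn x).eq_or_lt with h | h
  · rw [apply_eq_zero_of_homogeneous hn0 hf h.symm, ← h, mul_zero]
  · obtain ⟨h1, hfx⟩ := apply_inv_smul_of_homogeneous hn hf h
    have := hK _ h1
    rwa [hfx, div_le_iff₀ h] at this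

lemma mul_le_of_forall_unit (hnn : ∀ x, 0 ≤ n x) (hn : ∀ (c : ℝ) x, n (c • x) = |c| * n x)
    (hn0 : ∀ x, n x = 0 → x = 0) (hf : ∀ (c : ℝ) x, f (c • x) = |c| * f x)
    (hK : ∀ c : ℝ, n (c • x) = 1 → K ≤ f (c • x)) : K * n x ≤ f x := by
  rcases (hnn x).eq_or_lt with h | h
  · rw [apply_eq_zero_of_homogeneous hn0 hf h.symm, ← h, mul_zero]
  · obtain ⟨h1, hfx⟩ := apply_inv_smul_of_homogeneous hn hf h
    have := hK _ h1
    rwa [hfx, le_div_iff₀ h] at this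

end Homogeneous

lemma div_le_csInf_of_mem {E : Type*} {f g : E → ℝ} {V : Set E} {x : E}
    (hne : ∃ c, ∀ y ∈ V, f y ≤ c * g y) (hx : x ∈ V) (hgx : 0 < g x) :
    f x / g x ≤ sInf {c | ∀ y ∈ V, f y ≤ c * g y} :=
  le_csInf hne fun _ hc => (div_le_iff₀ hgx).2 (hc x hx)

section Norms

open scoped Matrix.Norms.L2Operator

variable {d : ℕ}

lemma vnorm_eq_norm (v : Fin d → ℝ) : vnorm v = ‖WithLp.toLp 2 v‖ := by
  simp [vnorm, EuclideanSpace.norm_eq]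

lemma specNorm_eq_norm (M : Mat d) : specNorm M = ‖M‖ := by
  rw [specNorm, ← Matrix.l2_opNorm_toEuclideanCLM,
    ← ContinuousLinearMap.sSup_unitClosedBall_eq_norm]
  congr 1
  ext t
  constructor
  · rintro ⟨v, hv, rfl⟩
    refine ⟨WithLp.toLp 2 v, by simpa [vnorm_eq_norm] using hv, ?_⟩
    simp [vnorm_eq_norm]
  · rintro ⟨x, hx, rfl⟩
    exact ⟨x.ofLp, by simpa [vnorm_eq_norm] using hx, by rw [vnorm_eq_norm]; rfl⟩

-- `Matrix.of.symm M` is `M` as a plain function, which carries the sup norm.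
lemma normInf_eq_norm (M : Mat d) : normInf M = ‖Matrix.of.symm M‖ := by
  refine le_antisymm (Real.iSup_le (fun p => ?_) (norm_nonneg _)) ?_
  · exact (norm_le_pi_norm (Matrix.of.symm M p.1) p.2).trans (norm_le_pi_norm _ p.1)
  · refine (pi_norm_le_iff_of_nonneg (Real.iSup_nonneg fun _ => abs_nonneg _)).2 fun i => ?_
    refine (pi_norm_le_iff_of_nonneg (Real.iSup_nonneg fun _ => abs_nonneg _)).2 fun j => ?_
    exact le_ciSup (f := fun p : Fin d × Fin d => |M p.1 p.2|) (Set.finite_range _).bddAbove (i, j)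

lemma normInf_nonneg (M : Mat d) : 0 ≤ normInf M := by
  rw [normInf_eq_norm]; positivity

lemma abs_le_normInf (M : Mat d) (i j : Fin d) : |M i j| ≤ normInf M :=
  normInf_eq_norm M ▸ (norm_le_pi_norm (Matrix.of.symm M i) j).trans (norm_le_pi_norm _ i)

lemma normInf_smul (c : ℝ) (M : Mat d) : normInf (c • M) = |c| * normInf M := by
  simp only [normInf_eq_norm]
  exact norm_smul c (Matrix.of.symm M)

lemma normInf_add_le (M N : Mat d) : normInf (M + N) ≤ normInf M + normInf N := by
  simp only [normInf_eq_norm]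
  exact norm_add_le (Matrix.of.symm M) (Matrix.of.symm N)

lemma normInf_sub_le (M N : Mat d) : normInf (M - N) ≤ normInf M + normInf N := by
  simp only [normInf_eq_norm]
  exact norm_sub_le (Matrix.of.symm M) (Matrix.of.symm N)

lemma normInf_eq_zero {M : Mat d} : normInf M = 0 ↔ M = 0 := by
  rw [normInf_eq_norm, norm_eq_zero]
  rfl

lemma specNorm_nonneg (M : Mat d) : 0 ≤ specNorm M := by
  rw [specNorm_eq_norm]; positivity

lemma specNorm_smul (c : ℝ) (M : Mat d) : specNorm (c • M) = |c| * specNorm M := by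
  simp only [specNorm_eq_norm, norm_smul, Real.norm_eq_abs]

lemma specNorm_add_le (M N : Mat d) : specNorm (M + N) ≤ specNorm M + specNorm N := by
  simp only [specNorm_eq_norm]
  exact norm_add_le M N

lemma specNorm_sub_le (M N : Mat d) : specNorm (M - N) ≤ specNorm M + specNorm N := by
  simp only [specNorm_eq_norm]
  exact norm_sub_le M N

lemma specNorm_eq_zero {M : Mat d} : specNorm M = 0 ↔ M = 0 := by
  rw [specNorm_eq_norm, norm_eq_zero]

lemma normInf_pos {M : Mat d} (hM : M ≠ 0) : 0 < normInf M :=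
  (normInf_nonneg M).lt_of_ne fun h => hM (normInf_eq_zero.1 h.symm)

lemma specNorm_pos {M : Mat d} (hM : M ≠ 0) : 0 < specNorm M :=
  (specNorm_nonneg M).lt_of_ne fun h => hM (specNorm_eq_zero.1 h.symm)

def frobNorm (M : Mat d) : ℝ := ‖matEuclid d M‖

lemma frobNorm_nonneg (M : Mat d) : 0 ≤ frobNorm M := norm_nonneg _

lemma frobNorm_sq (M : Mat d) : frobNorm M ^ 2 = ∑ i, ∑ j, M i j ^ 2 := by
  rw [frobNorm, EuclideanSpace.real_norm_sq_eq, Fintype.sum_prod_type]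
  rfl

lemma specNorm_le_frobNorm (M : Mat d) : specNorm M ≤ frobNorm M := by
  rw [specNorm_eq_norm, ← Matrix.l2_opNorm_toEuclideanCLM]
  refine ContinuousLinearMap.opNorm_le_bound _ (frobNorm_nonneg M) fun x => ?_
  rw [← sq_le_sq₀ (norm_nonneg _) (by positivity [frobNorm_nonneg M]), mul_pow, frobNorm_sq,
    EuclideanSpace.real_norm_sq_eq, EuclideanSpace.real_norm_sq_eq, Finset.sum_mul]
  refine Finset.sum_le_sum fun i _ => ?_
  simpa [Matrix.ofLp_toEuclideanCLM, Matrix.mulVec, dotProduct] using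
    Finset.sum_mul_sq_le_sq_mul_sq Finset.univ (M i) x.ofLp

lemma normInf_le_specNorm (M : Mat d) : normInf M ≤ specNorm M := by
  classical
  refine Real.iSup_le (fun p => ?_) (specNorm_nonneg M)
  obtain ⟨i, j⟩ := p
  set A := toEuclideanCLM (n := Fin d) (𝕜 := ℝ) M
  calc |M i j| = |A (EuclideanSpace.single j 1) i| := by simp [A]
    _ ≤ ‖A (EuclideanSpace.single j 1)‖ := by
        simpa using PiLp.norm_apply_le (A (.single j 1)) i
    _ ≤ ‖A‖ * ‖EuclideanSpace.single j (1 : ℝ)‖ := A.le_opNorm _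
    _ = specNorm M := by simp [A, specNorm_eq_norm, Matrix.l2_opNorm_toEuclideanCLM]

lemma frobNorm_le_card_mul_normInf (M : Mat d) : frobNorm M ≤ d * normInf M := by
  rw [← sq_le_sq₀ (frobNorm_nonneg M) (by positivity [normInf_nonneg M]), frobNorm_sq]
  calc ∑ i, ∑ j, M i j ^ 2 ≤ ∑ _i : Fin d, ∑ _j : Fin d, normInf M ^ 2 :=
        Finset.sum_le_sum fun i _ => Finset.sum_le_sum fun j _ =>
          sq_abs (M i j) ▸ pow_le_pow_left₀ (abs_nonneg _) (abs_le_normInf M i j) 2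
    _ = (d * normInf M) ^ 2 := by
        simp only [Finset.sum_const, Finset.card_univ, Fintype.card_fin, nsmul_eq_mul]
        ring

lemma normInf_le_frobNorm (M : Mat d) : normInf M ≤ frobNorm M :=
  (normInf_le_specNorm M).trans (specNorm_le_frobNorm M)

lemma specNorm_le_card_mul_normInf (M : Mat d) : specNorm M ≤ d * normInf M :=
  (specNorm_le_frobNorm M).trans (frobNorm_le_card_mul_normInf M)

end Norms

section Projections

variable {d : ℕ}

lemma minner_eq_sum (A B : Mat d) : minner A B = ∑ i, ∑ j, A i j * B i j := by
  rw [minner, Matrix.trace, Finset.sum_comm]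
  simp [Matrix.mul_apply]

lemma matEuclid_apply (M : Mat d) (p : Fin d × Fin d) : matEuclid d M p = M p.1 p.2 := rfl

lemma minner_eq_inner (A B : Mat d) : minner A B = inner ℝ (matEuclid d A) (matEuclid d B) := by
  rw [minner_eq_sum, PiLp.inner_apply, Fintype.sum_prod_type]
  simp [matEuclid_apply, mul_comm]

lemma minner_comm (A B : Mat d) : minner A B = minner B A := by
  rw [minner_eq_inner, minner_eq_inner, real_inner_comm]

lemma minner_add_right (A B C : Mat d) : minner A (B + C) = minner A B + minner A C := by
  simp only [minner_eq_inner, map_add, inner_add_right]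

lemma minner_smul_right (A : Mat d) (c : ℝ) (B : Mat d) :
    minner A (c • B) = c * minner A B := by
  simp only [minner_eq_inner, map_smul, real_inner_smul_right]

lemma minner_sub_right (A B C : Mat d) : minner A (B - C) = minner A B - minner A C := by
  simp only [minner_eq_inner, map_sub, inner_sub_right]

lemma minner_sum_right {ι : Type*} (A : Mat d) (s : Finset ι) (f : ι → Mat d) :
    minner A (∑ i ∈ s, f i) = ∑ i ∈ s, minner A (f i) := by
  simp only [minner_eq_inner, map_sum, inner_sum]

lemma matEuclid_proj (V : Submodule ℝ (Mat d)) (X : Mat d) :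
    matEuclid d (proj V X) =
      (V.map (matEuclid d : Mat d →ₗ[ℝ] _)).starProjection (matEuclid d X) :=
  (matEuclid d).apply_symm_apply _

lemma proj_mem (V : Submodule ℝ (Mat d)) (X : Mat d) : proj V X ∈ V := by
  obtain ⟨Y, hY, hYX⟩ := Submodule.mem_map.1
    ((V.map (matEuclid d : Mat d →ₗ[ℝ] _)).starProjection_apply_mem (matEuclid d X))
  rw [← matEuclid_proj] at hYX
  exact (matEuclid d).injective hYX ▸ hY

lemma proj_eq_of_forall_minner_eq_zero {V : Submodule ℝ (Mat d)} {X P : Mat d} (hP : P ∈ V)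
    (h : ∀ N ∈ V, minner (X - P) N = 0) : proj V X = P := by
  refine (matEuclid d).injective ?_
  rw [matEuclid_proj]
  refine Submodule.eq_starProjection_of_mem_of_inner_eq_zero ⟨P, hP, rfl⟩ ?_
  rintro _ ⟨N, hN, rfl⟩
  rw [← map_sub, ← h N hN, minner_eq_inner]
  rfl

lemma proj_eq_self {V : Submodule ℝ (Mat d)} {X : Mat d} (hX : X ∈ V) : proj V X = X :=
  proj_eq_of_forall_minner_eq_zero hX fun N _ => by simp [minner]

lemma proj_add (V : Submodule ℝ (Mat d)) (X Y : Mat d) :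
    proj V (X + Y) = proj V X + proj V Y := by
  simp only [proj, map_add, Submodule.coe_add]

lemma proj_smul (V : Submodule ℝ (Mat d)) (c : ℝ) (X : Mat d) :
    proj V (c • X) = c • proj V X := by
  simp only [proj, map_smul, Submodule.coe_smul]

lemma projPerp_add (V : Submodule ℝ (Mat d)) (X Y : Mat d) :
    projPerp V (X + Y) = projPerp V X + projPerp V Y := by
  simp only [projPerp, proj_add]
  abel

lemma projPerp_smul (V : Submodule ℝ (Mat d)) (c : ℝ) (X : Mat d) :
    projPerp V (c • X) = c • projPerp V X := by
  simp only [projPerp, proj_smul, smul_sub]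

lemma frobNorm_proj_le (V : Submodule ℝ (Mat d)) (X : Mat d) :
    frobNorm (proj V X) ≤ frobNorm X := by
  rw [frobNorm, matEuclid_proj]
  exact Submodule.norm_starProjection_apply_le _ _

lemma frobNorm_projPerp_le (V : Submodule ℝ (Mat d)) (X : Mat d) :
    frobNorm (projPerp V X) ≤ frobNorm X := by
  rw [frobNorm, projPerp, map_sub, matEuclid_proj,
    ← Submodule.starProjection_orthogonal_val]
  exact Submodule.norm_starProjection_apply_le _ _

end Projections

section Sparse

variable {d : ℕ}

lemma sum_mul_eq_zero_of_transpose_eq_neg {A N : Mat d} (hA : Aᵀ = -A) (hN : Nᵀ = N) :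
    ∑ i, ∑ j, A i j * N i j = 0 := by
  have hswap : ∑ i, ∑ j, A i j * N i j = -∑ i, ∑ j, A i j * N i j := by
    conv_lhs => rw [Finset.sum_comm]
    simp only [← Finset.sum_neg_distrib]
    refine Finset.sum_congr rfl fun i _ => Finset.sum_congr rfl fun j _ => ?_
    rw [← Matrix.transpose_apply A, ← Matrix.transpose_apply N i, hA, hN]
    simp
  linarith

lemma proj_omegaS {S : Mat d} (hS : S.IsSymm) (X : Mat d) :
    proj (OmegaS S) X = Matrix.of fun i j => if S i j = 0 then 0 else (X i j + X j i) / 2 := by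
  have hS' : ∀ i j, S j i = S i j := fun i j => hS.apply i j
  refine proj_eq_of_forall_minner_eq_zero ⟨?_, fun i j h => by simp [h]⟩ ?_
  · ext i j
    by_cases h : S i j = 0 <;> simp [hS' i j, h, add_comm]
  · rintro N ⟨hN, hN0⟩
    let A : Mat d := Matrix.of fun i j => if S i j = 0 then 0 else (X i j - X j i) / 2
    have hA : Aᵀ = -A := by
      ext i j
      by_cases h : S i j = 0 <;> simp [A, hS' i j, h]
      ring
    refine (minner_eq_sum _ _).trans (Eq.trans ?_ (sum_mul_eq_zero_of_transpose_eq_neg hA hN))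
    refine Finset.sum_congr rfl fun i _ => Finset.sum_congr rfl fun j _ => ?_
    by_cases h : S i j = 0
    · simp [A, h, hN0 i j h]
    · simp only [A, Matrix.sub_apply, Matrix.of_apply, if_neg h]
      ring

lemma normInf_proj_omegaS_le {S : Mat d} (hS : S.IsSymm) (X : Mat d) :
    normInf (proj (OmegaS S) X) ≤ normInf X := by
  rw [proj_omegaS hS]
  refine Real.iSup_le (fun p => ?_) (normInf_nonneg X)
  have hadd := abs_add_le (X p.1 p.2) (X p.2 p.1)
  have hij := abs_le_normInf X p.1 p.2
  have hji := abs_le_normInf X p.2 p.1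
  by_cases h : S p.1 p.2 = 0
  · simp [h, normInf_nonneg X]
  · simp only [Matrix.of_apply, if_neg h, abs_div, abs_two]
    linarith

lemma normInf_projPerp_omegaS_le {S : Mat d} (hS : S.IsSymm) (X : Mat d) :
    normInf (projPerp (OmegaS S) X) ≤ normInf X := by
  rw [projPerp, proj_omegaS hS]
  refine Real.iSup_le (fun p => ?_) (normInf_nonneg X)
  have hsub := abs_sub (X p.1 p.2) (X p.2 p.1)
  have hij := abs_le_normInf X p.1 p.2
  have hji := abs_le_normInf X p.2 p.1
  by_cases h : S p.1 p.2 = 0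
  · simpa [h] using hij
  · have hhalf : X p.1 p.2 - (X p.1 p.2 + X p.2 p.1) / 2 = (X p.1 p.2 - X p.2 p.1) / 2 := by ring
    simp only [Matrix.sub_apply, Matrix.of_apply, if_neg h, hhalf, abs_div, abs_two]
    linarith

end Sparse

section LowRank

open scoped Matrix.Norms.L2Operator

variable {d r : ℕ} {U : Matrix (Fin d) (Fin r) ℝ}

lemma isStarProjection_one_sub_mul_transpose (hU : Uᵀ * U = 1) :
    IsStarProjection (1 - U * Uᵀ) := by
  refine IsStarProjection.one_sub ⟨?_, ?_⟩
  · rw [IsIdempotentElem, Matrix.mul_assoc, ← Matrix.mul_assoc Uᵀ, hU, Matrix.one_mul]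
  · simp [IsSelfAdjoint, Matrix.star_eq_conjTranspose]

lemma proj_tSpace (hU : Uᵀ * U = 1) {X : Mat d} (hX : Xᵀ = X) :
    proj (TSpace U) X = X - (1 - U * Uᵀ) * X * (1 - U * Uᵀ) := by
  have hQU : (1 - U * Uᵀ) * U = 0 := by rw [Matrix.sub_mul, Matrix.mul_assoc, hU]; simp
  have hUQ : Uᵀ * (1 - U * Uᵀ) = 0 := by rw [Matrix.mul_sub, ← Matrix.mul_assoc, hU]; simp
  refine proj_eq_of_forall_minner_eq_zero
    ⟨X * U - (2⁻¹ : ℝ) • (U * (Uᵀ * X * U)), ?_⟩ ?_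
  · simp only [Matrix.transpose_sub, Matrix.transpose_smul, Matrix.transpose_mul,
      Matrix.transpose_transpose, hX]
    simp only [Matrix.mul_sub, Matrix.sub_mul, Matrix.mul_smul,
      Matrix.smul_mul, Matrix.mul_one, Matrix.one_mul, Matrix.mul_assoc]
    module
  · rintro _ ⟨Y, rfl⟩
    have hQX : ((1 - U * Uᵀ) * X * (1 - U * Uᵀ))ᵀ = (1 - U * Uᵀ) * X * (1 - U * Uᵀ) := by
      simp [Matrix.transpose_mul, hX, Matrix.mul_assoc]
    have h1 : (1 - U * Uᵀ) * X * (1 - U * Uᵀ) * (U * Yᵀ) = 0 := by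
      rw [← Matrix.mul_assoc, Matrix.mul_assoc _ _ U, hQU]; simp
    have h2 : ((1 - U * Uᵀ) * X * (1 - U * Uᵀ) * (Y * Uᵀ)).trace = 0 := by
      rw [Matrix.trace_mul_comm, Matrix.mul_assoc, ← Matrix.mul_assoc Uᵀ,
        ← Matrix.mul_assoc Uᵀ, hUQ]
      simp
    rw [sub_sub_cancel, minner, hQX, Matrix.mul_add, Matrix.trace_add, h1, h2,
      Matrix.trace_zero, add_zero]

lemma projPerp_tSpace (hU : Uᵀ * U = 1) {X : Mat d} (hX : Xᵀ = X) :
    projPerp (TSpace U) X = (1 - U * Uᵀ) * X * (1 - U * Uᵀ) := by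
  rw [projPerp, proj_tSpace hU hX, sub_sub_cancel]

lemma specNorm_projPerp_tSpace_le (hU : Uᵀ * U = 1) {X : Mat d} (hX : Xᵀ = X) :
    specNorm (projPerp (TSpace U) X) ≤ specNorm X := by
  have hQ := (isStarProjection_one_sub_mul_transpose hU).norm_le
  rw [projPerp_tSpace hU hX, specNorm_eq_norm, specNorm_eq_norm]
  calc ‖(1 - U * Uᵀ) * X * (1 - U * Uᵀ)‖
        ≤ ‖1 - U * Uᵀ‖ * ‖X‖ * ‖1 - U * Uᵀ‖ :=
        (norm_mul_le _ _).trans (by gcongr; exact norm_mul_le _ _)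
    _ ≤ 1 * ‖X‖ * 1 := by gcongr
    _ = ‖X‖ := by ring

lemma specNorm_proj_tSpace_le (hU : Uᵀ * U = 1) {X : Mat d} (hX : Xᵀ = X) :
    specNorm (proj (TSpace U) X) ≤ 2 * specNorm X := by
  calc specNorm (proj (TSpace U) X) = specNorm (X - projPerp (TSpace U) X) := by
        rw [projPerp, sub_sub_cancel]
    _ ≤ specNorm X + specNorm (projPerp (TSpace U) X) := specNorm_sub_le _ _
    _ ≤ 2 * specNorm X := by linarith [specNorm_projPerp_tSpace_le hU hX]

end LowRank

section Hessian

variable {d : ℕ}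

lemma hessA_add (Θ M N : Mat d) : hessA Θ (M + N) = hessA Θ M + hessA Θ N := by
  simp only [hessA, minner_add_right, mul_add, add_smul, Finset.sum_add_distrib]
  abel

lemma hessA_smul (Θ : Mat d) (c : ℝ) (M : Mat d) : hessA Θ (c • M) = c • hessA Θ M := by
  simp only [hessA, minner_smul_right, smul_sub, Finset.smul_sum, smul_smul, mul_left_comm c,
    mul_comm c]

lemma phi_transpose (x : Fin d → Bool) : (phi x)ᵀ = phi x := by
  ext i j
  simp [phi, mul_comm]

lemma hessA_transpose (Θ M : Mat d) : (hessA Θ M)ᵀ = hessA Θ M := by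
  simp [hessA, meanPhi, Matrix.transpose_sum, phi_transpose]

lemma exists_frobNorm_hessA_le (Θ : Mat d) :
    ∃ K, ∀ M, normInf M ≤ 1 → frobNorm (hessA Θ M) ≤ K := by
  let H : Mat d →ₗ[ℝ] Mat d := ⟨⟨hessA Θ, hessA_add Θ⟩, hessA_smul Θ⟩
  let G := LinearMap.toContinuousLinearMap
    ((matEuclid d).toLinearMap ∘ₗ H ∘ₗ (matEuclid d).symm.toLinearMap)
  refine ⟨‖G‖ * d, fun M hM => ?_⟩
  calc frobNorm (hessA Θ M) ≤ ‖G‖ * frobNorm M := by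
        simpa [G, H, frobNorm] using G.le_opNorm (matEuclid d M)
    _ ≤ ‖G‖ * (d * normInf M) := by gcongr; exact frobNorm_le_card_mul_normInf M
    _ ≤ ‖G‖ * d := by gcongr; exact mul_le_of_le_one_right (Nat.cast_nonneg d) hM

lemma sum_isingPMF (Θ : Mat d) : ∑ x, isingPMF Θ x = 1 := by
  have hpos : 0 < ∑ x : Fin d → Bool, Real.exp (minner Θ (phi x)) :=
    Finset.sum_pos (fun x _ => Real.exp_pos _) Finset.univ_nonempty
  simp only [isingPMF, logA, Real.exp_sub, ← Finset.sum_div, Real.exp_log hpos]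
  exact div_self hpos.ne'

lemma minner_meanPhi (Θ M : Mat d) :
    minner (meanPhi Θ) M = ∑ x, isingPMF Θ x * minner (phi x) M := by
  simp only [minner_comm _ M, meanPhi, minner_sum_right, minner_smul_right]

lemma minner_hessA_self (Θ M : Mat d) :
    minner M (hessA Θ M) =
      ∑ x, isingPMF Θ x * minner (phi x) M ^ 2 - minner (meanPhi Θ) M ^ 2 := by
  simp only [hessA, minner_sub_right, minner_sum_right, minner_smul_right, minner_comm M (phi _),
    minner_comm M (meanPhi Θ), sq, mul_assoc]

lemma minner_phi_indicator (S : Finset (Fin d)) (M : Mat d) :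
    minner (phi fun k => decide (k ∈ S)) M = ∑ i ∈ S, ∑ j ∈ S, M i j := by
  simp [minner_eq_sum, phi, b2r, ite_mul, Finset.sum_ite_mem]

lemma eq_zero_of_forall_minner_phi_eq_zero {M : Mat d} (hM : M.IsSymm)
    (h : ∀ x, minner (phi x) M = 0) : M = 0 := by
  classical
  have hdiag : ∀ i, M i i = 0 := fun i => by
    simpa only [minner_phi_indicator, Finset.sum_singleton] using
      h fun k => decide (k ∈ ({i} : Finset (Fin d)))
  ext i j
  rcases eq_or_ne i j with rfl | hij
  · exact hdiag i
  · have hij' := h fun k => decide (k ∈ ({i, j} : Finset (Fin d)))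
    rw [minner_phi_indicator, Finset.sum_pair hij, Finset.sum_pair hij, Finset.sum_pair hij,
      hdiag i, hdiag j, hM.apply i j] at hij'
    simp only [Matrix.zero_apply]
    linarith

-- `⟨M, H M⟩` is the variance of `⟨Φ, M⟩`; if it vanishes, `⟨Φ(x), M⟩` is constant, hence equal to
-- its value `0` at `x = 0`.
lemma hessA_ne_zero {Θ M : Mat d} (hM : M.IsSymm) (hM0 : M ≠ 0) : hessA Θ M ≠ 0 := by
  intro hH
  have hvar : ∑ x, isingPMF Θ x * (minner (phi x) M - minner (meanPhi Θ) M) ^ 2 = 0 := by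
    rw [minner_meanPhi, sum_mul_sub_sq_eq (sum_isingPMF Θ), ← minner_meanPhi,
      ← minner_hessA_self, hH]
    simp [minner]
  have hconst : ∀ x, minner (phi x) M = minner (meanPhi Θ) M := fun x => by
    have hx := (Finset.sum_eq_zero_iff_of_nonneg fun y _ =>
      mul_nonneg (Real.exp_pos _).le (sq_nonneg _)).1 hvar x (Finset.mem_univ x)
    exact sub_eq_zero.1 (pow_eq_zero_iff two_ne_zero |>.1
      ((mul_eq_zero.1 hx).resolve_left (Real.exp_pos _).ne'))
  have h0 : minner (phi fun _ => false) M = 0 := by simp [minner_eq_sum, phi, b2r]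
  exact hM0 (eq_zero_of_forall_minner_phi_eq_zero hM fun x =>
    (hconst x).trans ((hconst _).symm.trans h0))

end Hessian

section Constants

variable {d : ℕ}

lemma one_mem_xi_bounds (T : Submodule ℝ (Mat d)) :
    (1 : ℝ) ∈ {c | ∀ M ∈ T, normInf M ≤ c * specNorm M} :=
  fun M _ => (one_mul (specNorm M)).symm ▸ normInf_le_specNorm M

lemma card_mem_mu_bounds (Om : Submodule ℝ (Mat d)) :
    (d : ℝ) ∈ {c | ∀ N ∈ Om, specNorm N ≤ c * normInf N} :=
  fun N _ => specNorm_le_card_mul_normInf N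

lemma xi_le_one (T : Submodule ℝ (Mat d)) : xi T ≤ 1 := by
  by_cases hb : BddBelow {c | ∀ M ∈ T, normInf M ≤ c * specNorm M}
  · exact csInf_le hb (one_mem_xi_bounds T)
  -- the junk case `T = ⊥`, where every real is a bound and `sInf` returns `0`
  · rw [xi, Real.sInf_of_not_bddBelow hb]
    exact zero_le_one

lemma normInf_le_xi_mul {T : Submodule ℝ (Mat d)} {M : Mat d} (hM : M ∈ T) :
    normInf M ≤ xi T * specNorm M := by
  rcases (specNorm_nonneg M).eq_or_lt with h | h
  · rw [← h, mul_zero, normInf_eq_zero.2 (specNorm_eq_zero.1 h.symm)]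
  · rw [← div_le_iff₀ h]
    exact div_le_csInf_of_mem ⟨1, one_mem_xi_bounds T⟩ hM h

lemma xi_pos {T : Submodule ℝ (Mat d)} {M : Mat d} (hM : M ∈ T) (hM0 : M ≠ 0) : 0 < xi T :=
  (div_pos (normInf_pos hM0) (specNorm_pos hM0)).trans_le <| div_le_csInf_of_mem
    ⟨1, one_mem_xi_bounds T⟩ hM (specNorm_pos hM0)

lemma specNorm_le_mu_mul {Om : Submodule ℝ (Mat d)} {N : Mat d} (hN : N ∈ Om) :
    specNorm N ≤ mu Om * normInf N := by
  rcases (normInf_nonneg N).eq_or_lt with h | h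
  · rw [← h, mul_zero, specNorm_eq_zero.2 (normInf_eq_zero.1 h.symm)]
  · rw [← div_le_iff₀ h]
    exact div_le_csInf_of_mem ⟨d, card_mem_mu_bounds Om⟩ hN h

lemma mu_pos {Om : Submodule ℝ (Mat d)} {N : Mat d} (hN : N ∈ Om) (hN0 : N ≠ 0) : 0 < mu Om :=
  (div_pos (specNorm_pos hN0) (normInf_pos hN0)).trans_le <| div_le_csInf_of_mem
    ⟨d, card_mem_mu_bounds Om⟩ hN (normInf_pos hN0)

lemma rho_nonneg (T T' : Submodule ℝ (Mat d)) : 0 ≤ rho T T' :=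
  Real.sSup_nonneg fun _ ⟨_, _, h⟩ => h ▸ specNorm_nonneg _

lemma specNorm_proj_sub_proj_le (T T' : Submodule ℝ (Mat d)) (X : Mat d) :
    specNorm (proj T X - proj T' X) ≤ rho T T' * specNorm X := by
  refine le_mul_of_forall_unit (f := fun X => specNorm (proj T X - proj T' X)) specNorm_nonneg
    specNorm_smul (fun _ => specNorm_eq_zero.1)
    (fun c X => by simp only [proj_smul, ← smul_sub, specNorm_smul]) fun c hc => ?_
  refine le_csSup ⟨2 * d, ?_⟩ ⟨c • X, hc, rfl⟩
  rintro _ ⟨Y, hY, rfl⟩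
  calc specNorm (proj T Y - proj T' Y) ≤ frobNorm (proj T Y - proj T' Y) :=
        specNorm_le_frobNorm _
    _ ≤ frobNorm (proj T Y) + frobNorm (proj T' Y) := by
        simpa only [frobNorm, map_sub] using norm_sub_le _ _
    _ ≤ d * normInf Y + d * normInf Y := by
        gcongr <;> exact (frobNorm_proj_le _ Y).trans (frobNorm_le_card_mul_normInf Y)
    _ ≤ 2 * d := by nlinarith [normInf_le_specNorm Y]

end Constants

namespace Setup

variable {d r : ℕ} (C : Setup d r) {T' : Submodule ℝ (Mat d)} {M N : Mat d} {ε ν γ : ℝ}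

lemma hop_add (X Y : Mat d) : C.Hop (X + Y) = C.Hop X + C.Hop Y := hessA_add _ _ _

lemma hop_smul (c : ℝ) (X : Mat d) : C.Hop (c • X) = c • C.Hop X := hessA_smul _ _ _

lemma hop_transpose (X : Mat d) : (C.Hop X)ᵀ = C.Hop X := hessA_transpose _ _

lemma alphaOm_mul_le (hM : M ∈ C.Om) :
    C.alphaOm * normInf M ≤ normInf (proj C.Om (C.Hop M)) :=
  mul_le_of_forall_unit (f := fun X => normInf (proj C.Om (C.Hop X))) normInf_nonneg normInf_smul
    (fun _ => normInf_eq_zero.1) (fun c X => by simp only [hop_smul, proj_smul, normInf_smul])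
    fun c hc => csInf_le ⟨0, by rintro _ ⟨_, -, -, rfl⟩; exact normInf_nonneg _⟩
      ⟨c • M, C.Om.smul_mem c hM, hc, rfl⟩

lemma alphaT_mul_le (hT : IsTangentSpace d r T') (hρ : rho C.Tt T' ≤ ε) (hN : N ∈ T') :
    C.alphaT ε * specNorm N ≤ specNorm (proj T' (C.Hop N)) :=
  mul_le_of_forall_unit (f := fun X => specNorm (proj T' (C.Hop X))) specNorm_nonneg
    specNorm_smul (fun _ => specNorm_eq_zero.1)
    (fun c X => by simp only [hop_smul, proj_smul, specNorm_smul])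
    fun c hc => csInf_le ⟨0, by rintro _ ⟨_, -, -, _, -, -, rfl⟩; exact specNorm_nonneg _⟩
      ⟨T', hT, hρ, c • N, T'.smul_mem c hN, hc, rfl⟩

lemma normInf_projPerp_le_deltaOm_mul (hM : M ∈ C.Om) :
    normInf (projPerp C.Om (C.Hop M)) ≤ C.deltaOm * normInf M := by
  obtain ⟨K, hK⟩ := exists_frobNorm_hessA_le C.Thstar
  refine le_mul_of_forall_unit (f := fun X => normInf (projPerp C.Om (C.Hop X))) normInf_nonneg
    normInf_smul (fun _ => normInf_eq_zero.1)
    (fun c X => by simp only [hop_smul, projPerp_smul, normInf_smul])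
    fun c hc => le_csSup ⟨K, ?_⟩ ⟨c • M, C.Om.smul_mem c hM, hc, rfl⟩
  rintro _ ⟨X, -, hX, rfl⟩
  exact (normInf_le_frobNorm _).trans ((frobNorm_projPerp_le _ _).trans (hK X hX.le))

lemma specNorm_projPerp_le_deltaT_mul (hT : IsTangentSpace d r T') (hρ : rho C.Tt T' ≤ ε)
    (hN : N ∈ T') : specNorm (projPerp T' (C.Hop N)) ≤ C.deltaT ε * specNorm N := by
  obtain ⟨K, hK⟩ := exists_frobNorm_hessA_le C.Thstar
  refine le_mul_of_forall_unit (f := fun X => specNorm (projPerp T' (C.Hop X))) specNorm_nonneg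
    specNorm_smul (fun _ => specNorm_eq_zero.1)
    (fun c X => by simp only [hop_smul, projPerp_smul, specNorm_smul])
    fun c hc => le_csSup ⟨K, ?_⟩ ⟨T', hT, hρ, c • N, T'.smul_mem c hN, hc, rfl⟩
  rintro _ ⟨-, -, -, X, -, hX, rfl⟩
  exact (specNorm_le_frobNorm _).trans ((frobNorm_projPerp_le _ _).trans
    (hK X (hX ▸ normInf_le_specNorm X)))

lemma specNorm_hop_le_betaOm_mul (hM : M ∈ C.Om) :
    specNorm (C.Hop M) ≤ C.betaOm * specNorm M := by
  obtain ⟨K, hK⟩ := exists_frobNorm_hessA_le C.Thstar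
  refine le_mul_of_forall_unit (f := fun X => specNorm (C.Hop X)) specNorm_nonneg
    specNorm_smul (fun _ => specNorm_eq_zero.1)
    (fun c X => by simp only [hop_smul, specNorm_smul])
    fun c hc => le_csSup ⟨K, ?_⟩ ⟨c • M, C.Om.smul_mem c hM, hc, rfl⟩
  rintro _ ⟨X, -, hX, rfl⟩
  exact (specNorm_le_frobNorm _).trans (hK X (hX ▸ normInf_le_specNorm X))

lemma normInf_hop_le_betaT_mul (hT : IsTangentSpace d r T') (hρ : rho C.Tt T' ≤ C.xiT / 2)
    (hN : N ∈ T') : normInf (C.Hop N) ≤ C.betaT * normInf N := by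
  obtain ⟨K, hK⟩ := exists_frobNorm_hessA_le C.Thstar
  refine le_mul_of_forall_unit (f := fun X => normInf (C.Hop X)) normInf_nonneg
    normInf_smul (fun _ => normInf_eq_zero.1)
    (fun c X => by simp only [hop_smul, normInf_smul])
    fun c hc => le_csSup ⟨K, ?_⟩ ⟨T', hT, hρ, c • N, T'.smul_mem c hN, hc, rfl⟩
  rintro _ ⟨-, -, -, X, -, hX, rfl⟩
  exact (normInf_le_frobNorm _).trans (hK X hX.le)

lemma sstar_mem_om : C.Sstar ∈ C.Om := ⟨C.hSsymm, fun _ _ h => h⟩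

lemma betaC_pos : 0 < C.betaC := by
  have hH := specNorm_pos (hessA_ne_zero (Θ := C.Thstar) C.hSsymm C.hSne)
  have hβ := C.specNorm_hop_le_betaOm_mul C.sstar_mem_om
  have hS := specNorm_nonneg C.Sstar
  exact lt_max_of_lt_left (pos_of_mul_pos_left (hH.trans_le hβ) hS)

lemma muOm_pos : 0 < C.muOm := mu_pos C.sstar_mem_om C.hSne

lemma xiT_pos (hr : 1 ≤ r) : 0 < C.xiT := by
  -- `2UUᵀ ∈ T` has trace `2r`
  refine xi_pos (M := C.U * C.Uᵀ + C.U * C.Uᵀ) ⟨C.U, rfl⟩ fun h => ?_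
  have htr := congrArg Matrix.trace h
  rw [Matrix.trace_add, Matrix.trace_mul_comm, C.hU, Matrix.trace_one, Matrix.trace_zero,
    Fintype.card_fin] at htr
  norm_cast at htr
  omega

-- `N` lies within `ξ(T) ‖N‖ / 2` of its projection onto `T`, where `ξ(T)` applies.
lemma normInf_le_two_mul_xiT_mul (hρ : rho C.Tt T' ≤ C.xiT / 2) (hN : N ∈ T') :
    normInf N ≤ 2 * C.xiT * specNorm N := by
  have hξ : C.xiT ≤ 1 := xi_le_one _
  have hξ0 : 0 ≤ C.xiT := by linarith [rho_nonneg C.Tt T']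
  have hN0 := specNorm_nonneg N
  have hdiff : specNorm (proj C.Tt N - N) ≤ C.xiT / 2 * specNorm N := by
    have h := specNorm_proj_sub_proj_le C.Tt T' N
    rw [proj_eq_self hN] at h
    exact h.trans (mul_le_mul_of_nonneg_right hρ hN0)
  have hP : specNorm (proj C.Tt N) ≤ 3 / 2 * specNorm N := by
    have h := specNorm_add_le N (proj C.Tt N - N)
    rw [add_sub_cancel] at h
    nlinarith
  calc normInf N = normInf (proj C.Tt N - (proj C.Tt N - N)) := by rw [sub_sub_cancel]
    _ ≤ normInf (proj C.Tt N) + normInf (proj C.Tt N - N) := normInf_sub_le _ _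
    _ ≤ C.xiT * specNorm (proj C.Tt N) + specNorm (proj C.Tt N - N) :=
        add_le_add (normInf_le_xi_mul (proj_mem _ _)) (normInf_le_specNorm _)
    _ ≤ 2 * C.xiT * specNorm N := by nlinarith

lemma normInf_hop_le (hT : IsTangentSpace d r T') (hρ : rho C.Tt T' ≤ C.xiT / 2)
    (hN : N ∈ T') :
    normInf (C.Hop N) ≤ 2 * C.betaC * C.xiT * specNorm N :=
  calc normInf (C.Hop N) ≤ C.betaT * normInf N := C.normInf_hop_le_betaT_mul hT hρ hN
    _ ≤ C.betaC * (2 * C.xiT * specNorm N) := mul_le_mul (le_max_right _ _)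
        (C.normInf_le_two_mul_xiT_mul hρ hN) (normInf_nonneg N) C.betaC_pos.le
    _ = 2 * C.betaC * C.xiT * specNorm N := by ring

lemma specNorm_hop_le (hM : M ∈ C.Om) :
    specNorm (C.Hop M) ≤ C.betaC * C.muOm * normInf M :=
  calc specNorm (C.Hop M) ≤ C.betaOm * specNorm M := C.specNorm_hop_le_betaOm_mul hM
    _ ≤ C.betaC * (C.muOm * normInf M) := mul_le_mul (le_max_left _ _)
        (specNorm_le_mu_mul hM) (specNorm_nonneg M) C.betaC_pos.le
    _ = C.betaC * C.muOm * normInf M := by ring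

lemma alphaC_mul_sub_le_normInf_proj (hT : IsTangentSpace d r T')
    (hρ : rho C.Tt T' ≤ C.xiT / 2) (hM : M ∈ C.Om) (hN : N ∈ T') :
    C.alphaC * normInf M - 2 * C.betaC * C.xiT * specNorm N ≤
      normInf (proj C.Om (C.Hop (M + N))) := by
  have hα : C.alphaC * normInf M ≤ C.alphaOm * normInf M :=
    mul_le_mul_of_nonneg_right (min_le_left _ _) (normInf_nonneg M)
  have hN' : normInf (proj C.Om (C.Hop N)) ≤ 2 * C.betaC * C.xiT * specNorm N :=
    (normInf_proj_omegaS_le C.hSsymm _).trans (C.normInf_hop_le hT hρ hN)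
  have h := normInf_sub_le (proj C.Om (C.Hop M) + proj C.Om (C.Hop N)) (proj C.Om (C.Hop N))
  rw [add_sub_cancel_right] at h
  rw [hop_add, proj_add]
  linarith [C.alphaOm_mul_le hM]

lemma alphaC_mul_sub_le_specNorm_proj (hT : IsTangentSpace d r T')
    (hρ : rho C.Tt T' ≤ C.xiT / 2) (hM : M ∈ C.Om) (hN : N ∈ T') :
    C.alphaC * specNorm N - 2 * C.betaC * C.muOm * normInf M ≤
      specNorm (proj T' (C.Hop (M + N))) := by
  have hα : C.alphaC * specNorm N ≤ C.alphaT (C.xiT / 2) * specNorm N :=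
    mul_le_mul_of_nonneg_right (min_le_right _ _) (specNorm_nonneg N)
  obtain ⟨U, -, hU, -, -, rfl⟩ := id hT
  have hM' : specNorm (proj (TSpace U) (C.Hop M)) ≤ 2 * (C.betaC * C.muOm * normInf M) :=
    (specNorm_proj_tSpace_le hU (C.hop_transpose M)).trans (by linarith [C.specNorm_hop_le hM])
  have h := specNorm_sub_le (proj (TSpace U) (C.Hop M) + proj (TSpace U) (C.Hop N))
    (proj (TSpace U) (C.Hop M))
  rw [add_sub_cancel_left] at h
  rw [hop_add, proj_add]
  linarith [C.alphaT_mul_le hT hρ hN]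

lemma normInf_projPerp_le (hT : IsTangentSpace d r T') (hρ : rho C.Tt T' ≤ C.xiT / 2)
    (hM : M ∈ C.Om) (hN : N ∈ T') :
    normInf (projPerp C.Om (C.Hop (M + N))) ≤
      C.deltaC * normInf M + 2 * C.betaC * C.xiT * specNorm N := by
  have hδ : C.deltaOm * normInf M ≤ C.deltaC * normInf M :=
    mul_le_mul_of_nonneg_right (le_max_left _ _) (normInf_nonneg M)
  have hN' : normInf (projPerp C.Om (C.Hop N)) ≤ 2 * C.betaC * C.xiT * specNorm N :=
    (normInf_projPerp_omegaS_le C.hSsymm _).trans (C.normInf_hop_le hT hρ hN)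
  rw [hop_add, projPerp_add]
  linarith [normInf_add_le (projPerp C.Om (C.Hop M)) (projPerp C.Om (C.Hop N)),
    C.normInf_projPerp_le_deltaOm_mul hM]

lemma specNorm_projPerp_le (hT : IsTangentSpace d r T') (hρ : rho C.Tt T' ≤ C.xiT / 2)
    (hM : M ∈ C.Om) (hN : N ∈ T') :
    specNorm (projPerp T' (C.Hop (M + N))) ≤
      C.deltaC * specNorm N + C.betaC * C.muOm * normInf M := by
  have hδ : C.deltaT (C.xiT / 2) * specNorm N ≤ C.deltaC * specNorm N :=
    mul_le_mul_of_nonneg_right (le_max_right _ _) (specNorm_nonneg N)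
  obtain ⟨U, -, hU, -, -, rfl⟩ := id hT
  have hM' : specNorm (projPerp (TSpace U) (C.Hop M)) ≤ C.betaC * C.muOm * normInf M :=
    (specNorm_projPerp_tSpace_le hU (C.hop_transpose M)).trans (C.specNorm_hop_le hM)
  rw [hop_add, projPerp_add]
  linarith [specNorm_add_le (projPerp (TSpace U) (C.Hop M)) (projPerp (TSpace U) (C.Hop N)),
    C.specNorm_projPerp_le_deltaT_mul hT hρ hN]

lemma gammaMin_pos (hr : 1 ≤ r) (hα : 0 < C.alphaC) (hν : 0 < ν) (hν' : ν ≤ 1 / 2) :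
    0 < C.gammaMin ν :=
  div_pos (mul_pos (mul_pos (mul_pos three_pos C.betaC_pos) (by linarith)) (C.xiT_pos hr))
    (mul_pos hν hα)

lemma mul_xiT_le_of_gammaMin_le (hα : 0 < C.alphaC) (hν : 0 < ν) (h : C.gammaMin ν ≤ γ) :
    3 * C.betaC * (2 - ν) * C.xiT ≤ ν * C.alphaC * γ := by
  rw [gammaMin, div_le_iff₀ (mul_pos hν hα)] at h
  linarith

lemma mul_muOm_le_of_le_gammaMax (hν' : ν ≤ 1 / 2) (h : γ ≤ C.gammaMax ν) :
    2 * C.betaC * (2 - ν) * C.muOm * γ ≤ ν * C.alphaC := by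
  rw [gammaMax, le_div_iff₀ (mul_pos (mul_pos (mul_pos two_pos C.betaC_pos) (by linarith))
    C.muOm_pos)] at h
  linarith

end Setup

theorem coupled_stability_maximum_effect_general (d r : ℕ) (hr : 1 ≤ r)
    (C : Setup d r) (ν γ : ℝ) (hstab : C.Stability ν)
    (hγ : γ ∈ Set.Icc (C.gammaMin ν) (C.gammaMax ν)) :
    ∀ T' : Submodule ℝ (Mat d), IsTangentSpace d r T' → rho C.Tt T' ≤ C.xiT / 2 →
      ∀ M N : Mat d, M ∈ C.Om → N ∈ T' →
        ganorm γ (projPerp C.Om (C.Hop (M + N))) (projPerp T' (C.Hop (M + N))) ≤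
          (1 - ν) * ganorm γ (proj C.Om (C.Hop (M + N))) (proj T' (C.Hop (M + N))) := by
  obtain ⟨hα, hν, hν', hδ⟩ := hstab
  intro T' hT hρ M N hM hN
  exact max_div_le_one_sub_mul_max_div hα.le hν hν'
    ((C.gammaMin_pos hr hα hν hν').trans_le hγ.1) (normInf_nonneg M) (specNorm_nonneg N)
    ((div_le_iff₀ hα).1 hδ) (C.mul_xiT_le_of_gammaMin_le hα hν hγ.1)
    (C.mul_muOm_le_of_le_gammaMax hν' hγ.2) (C.alphaC_mul_sub_le_normInf_proj hT hρ hM hN)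
    (C.alphaC_mul_sub_le_specNorm_proj hT hρ hM hN) (C.normInf_projPerp_le hT hρ hM hN)
    (C.specNorm_projPerp_le hT hρ hM hN)

/-- Proposition 1(b), coupled stability, maximum effect: under the
stability and γ-feasibility assumptions, for `γ ∈ [γ_min, γ_max]` and every tangent
space `T'` with `ρ(T,T') ≤ ξ(T)/2`, the maximum effect of `H*` on the orthogonal
complement is controlled: `‖P_{Y^⊥} D H*(M+N)‖_γ ≤ (1-ν)‖P_Y D H*(M+N)‖_γ`. -/
theorem coupled_stability_maximum_effect (d r : ℕ) (hd : 1 ≤ d) (hr : 1 ≤ r)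
    (C : Setup d r) (ν γ : ℝ) (hstab : C.Stability ν) (hfeas : C.GammaFeasible ν)
    (hγ : γ ∈ Set.Icc (C.gammaMin ν) (C.gammaMax ν)) :
    ∀ T' : Submodule ℝ (Mat d), IsTangentSpace d r T' → rho C.Tt T' ≤ C.xiT / 2 →
      ∀ M N : Mat d, M ∈ C.Om → N ∈ T' →
        ganorm γ (projPerp C.Om (C.Hop (M + N))) (projPerp T' (C.Hop (M + N))) ≤
          (1 - ν) * ganorm γ (proj C.Om (C.Hop (M + N))) (proj T' (C.Hop (M + N))) :=
  coupled_stability_maximum_effect_general d r hr C ν γ hstab hγ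

end IsingSL
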